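/- Let N = 2^m and consider cell probabilities p = (1/N)·1 + H^{-1}(0, μ^T)^T determined by an interaction mean vector μ ∈ R^{N-1} (so that the uniform distribution corresponds to μ = 0). Let Σ_μ = (H diag(p) H)_{[-1,-1]} be the second moment matrix of the nontrivial interactions. Then for all μ with ‖μ‖_2 ≤ (N-1)^{-1/2}, the quadratic form satisfies ‖μ‖_2^2 - c‖μ‖_2^3 ≤ μ^T Σ_μ μ ≤ ‖μ‖_2^2 + c‖μ‖_2^3 with c = (N-2)/√(N-1). -/

import Mathlib

open Matrix Finset

/-- The Sylvester–Hadamard matrix of order `2^m`, indexed by sign patterns; the constant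
interaction corresponds to the index `fun _ => false`. -/
def sylvesterHadamard (m : ℕ) : Matrix (Fin m → Bool) (Fin m → Bool) ℝ :=
  fun S k => ∏ i : Fin m, if S i ∧ k i then (-1 : ℝ) else 1

/-!
Write `N = 2^m`, `H = sylvesterHadamard m` and `v = H μ`. Since `H` is symmetric with
`H H = N • 1`, the cell probabilities are `p = N⁻¹ (1 + v)` and
`μᵀ Σ_μ μ = ∑ₖ pₖ vₖ² = ‖μ‖² + N⁻¹ ∑ₖ vₖ³`.
The row of `H` indexed by the constant interaction is all ones and `μ` has no constant component,
so `∑ₖ vₖ = 0` and `∑ₖ vₖ² = N ‖μ‖²`. For such a centred vector Cauchy–Schwarz gives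
`vₖ ≤ a := ‖μ‖ √(N-1)`, and on `(-∞, a]` the cube lies below the quadratic that touches it at
`-d := -‖μ‖ / √(N-1)` and meets it at `a`, because `(a - v)(v + d)² ≥ 0`. Summing yields
`|∑ₖ vₖ³| ≤ N (N-2) / √(N-1) ‖μ‖³`, with equality for `v = (a, -d, …, -d)`.
-/

section QuadraticForms

variable {ι R : Type*} [Fintype ι] [CommSemiring R]

theorem sum_subtype_eq_sum_of_eq_zero {M : Type*} [AddCommMonoid M] (P : ι → Prop)
    [Fintype (Subtype P)] (f : ι → M) (hf : ∀ i, ¬ P i → f i = 0) :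
    ∑ i : Subtype P, f i = ∑ i, f i := by
  classical
  rw [← sum_subtype (univ.filter P) (by simp) f, sum_filter_of_ne]
  exact fun i _ hi => not_not.1 (mt (hf i) hi)

theorem dotProduct_submatrix_mulVec_of_eq_zero (P : ι → Prop) [Fintype (Subtype P)]
    (M : Matrix ι ι R) (x : ι → R) (hx : ∀ i, ¬ P i → x i = 0) :
    (fun i : Subtype P => x i) ⬝ᵥ M.submatrix Subtype.val Subtype.val *ᵥ (fun i : Subtype P => x i)
      = x ⬝ᵥ M *ᵥ x := by
  have hinner : ∀ i, ∑ j : Subtype P, M i j * x j = ∑ j, M i j * x j := fun i =>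
    sum_subtype_eq_sum_of_eq_zero P (fun j => M i j * x j) fun j hj => by simp [hx j hj]
  simp only [dotProduct, mulVec, submatrix_apply, hinner]
  exact sum_subtype_eq_sum_of_eq_zero P (fun i => x i * ∑ j, M i j * x j) fun i hi => by
    simp [hx i hi]

theorem dotProduct_transpose_mul_diagonal_mul_mulVec [DecidableEq ι] (A : Matrix ι ι R)
    (p x : ι → R) :
    x ⬝ᵥ (Aᵀ * diagonal p * A) *ᵥ x = ∑ k, p k * (A *ᵥ x) k ^ 2 := by
  rw [← mulVec_mulVec, ← mulVec_mulVec, dotProduct_mulVec, vecMul_transpose]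
  simp only [dotProduct, mulVec_diagonal, sq]
  exact sum_congr rfl fun k _ => by ring

theorem mulVec_dotProduct_mulVec_self [DecidableEq ι] {A : Matrix ι ι R} {c : R}
    (hA : Aᵀ * A = c • 1) (x : ι → R) :
    A *ᵥ x ⬝ᵥ A *ᵥ x = c * (x ⬝ᵥ x) := by
  rw [dotProduct_mulVec, ← mulVec_transpose, mulVec_mulVec, hA, smul_mulVec, one_mulVec,
    smul_dotProduct, smul_eq_mul]

end QuadraticForms

section ThirdMoment

variable {K : Type*} [Fintype K] (v : K → ℝ)

theorem card_mul_sq_le_of_sum_eq_zero (hsum : ∑ j, v j = 0) (k : K) :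
    Fintype.card K * v k ^ 2 ≤ (Fintype.card K - 1) * ∑ j, v j ^ 2 := by
  classical
  have h := sq_sum_le_card_mul_sum_sq (s := univ.erase k) (f := v)
  rw [sum_erase_eq_sub (mem_univ k), sum_erase_eq_sub (mem_univ k), hsum,
    card_erase_of_mem (mem_univ k), card_univ, Nat.cast_sub (Fintype.card_pos_iff.2 ⟨k⟩),
    Nat.cast_one] at h
  linear_combination h

theorem le_sqrt_card_sub_one_mul_of_sum_eq_zero {t : ℝ} (ht : 0 ≤ t) (hsum : ∑ j, v j = 0)
    (hsq : ∑ j, v j ^ 2 = Fintype.card K * t ^ 2) (k : K) :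
    v k ≤ √(Fintype.card K - 1) * t := by
  have hcard : (1 : ℝ) ≤ Fintype.card K := by exact_mod_cast Fintype.card_pos_iff.2 ⟨k⟩
  have h := card_mul_sq_le_of_sum_eq_zero v hsum k
  rw [hsq] at h
  refine (abs_le_of_sq_le_sq' ?_ (by positivity)).2
  rw [mul_pow, Real.sq_sqrt (by linarith)]
  nlinarith

theorem sum_pow_three_le_of_sum_eq_zero {t : ℝ} (ht : 0 ≤ t) (hsum : ∑ j, v j = 0)
    (hsq : ∑ j, v j ^ 2 = Fintype.card K * t ^ 2) :
    ∑ j, v j ^ 3 ≤ Fintype.card K * (Fintype.card K - 2) / √(Fintype.card K - 1) * t ^ 3 := by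
  set N : ℝ := (Fintype.card K : ℝ)
  set r := √(N - 1)
  set a := r * t
  set d := t / r
  have hpoint : ∀ j, v j ^ 3 ≤ (a - 2 * d) * v j ^ 2 + (2 * a * d - d ^ 2) * v j + a * d ^ 2 :=
    fun j => by
      nlinarith [mul_nonneg (sub_nonneg.2 (le_sqrt_card_sub_one_mul_of_sum_eq_zero v ht hsum hsq j))
        (sq_nonneg (v j + d))]
  calc ∑ j, v j ^ 3
      ≤ ∑ j, ((a - 2 * d) * v j ^ 2 + (2 * a * d - d ^ 2) * v j + a * d ^ 2) :=
        sum_le_sum fun j _ => hpoint j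
    _ = (a - 2 * d) * (N * t ^ 2) + N * (a * d ^ 2) := by
        rw [sum_add_distrib, sum_add_distrib, ← mul_sum, ← mul_sum, hsum, hsq, sum_const,
          card_univ, nsmul_eq_mul]
        ring
    _ = N * (N - 2) / r * t ^ 3 := by
        rcases eq_or_ne r 0 with hr | hr
        -- `r = 0` only for `N ≤ 1`, where both sides are `0` because `t / 0 = 0`
        · simp [a, d, hr]
        have hr2 : r ^ 2 = N - 1 := Real.sq_sqrt (Real.sqrt_ne_zero'.1 hr).le
        simp only [a, d]
        field_simp
        linear_combination N * t ^ 3 * hr2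

theorem abs_sum_pow_three_le_of_sum_eq_zero {t : ℝ} (ht : 0 ≤ t) (hsum : ∑ j, v j = 0)
    (hsq : ∑ j, v j ^ 2 = Fintype.card K * t ^ 2) :
    |∑ j, v j ^ 3| ≤ Fintype.card K * (Fintype.card K - 2) / √(Fintype.card K - 1) * t ^ 3 := by
  have hneg := sum_pow_three_le_of_sum_eq_zero (-v) ht (by simp [hsum]) (by simpa using hsq)
  simp only [Pi.neg_apply, Odd.neg_pow (⟨1, rfl⟩ : Odd 3), sum_neg_distrib] at hneg
  exact abs_le.2 ⟨by linarith, sum_pow_three_le_of_sum_eq_zero v ht hsum hsq⟩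

end ThirdMoment

section SylvesterHadamard

variable (m : ℕ) (x : (Fin m → Bool) → ℝ)

theorem sylvesterHadamard_transpose : (sylvesterHadamard m)ᵀ = sylvesterHadamard m := by
  ext S k
  simp only [transpose_apply, sylvesterHadamard, and_comm]

theorem sylvesterHadamard_const_false_apply (k : Fin m → Bool) :
    sylvesterHadamard m (fun _ => false) k = 1 := by
  simp [sylvesterHadamard]

theorem sylvesterHadamard_mul_self :
    sylvesterHadamard m * sylvesterHadamard m = (2 : ℝ) ^ m • 1 := by
  ext S T
  have hfactor : ∀ i, ∑ b : Bool, (if S i ∧ b then (-1 : ℝ) else 1) * (if b ∧ T i then -1 else 1)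
      = if S i = T i then 2 else 0 := by
    intro i
    cases S i <;> cases T i <;> norm_num
  simp only [mul_apply, sylvesterHadamard, ← prod_mul_distrib]
  rw [← Fintype.prod_sum fun i (b : Bool) =>
    (if S i ∧ b then (-1 : ℝ) else 1) * (if b ∧ T i then -1 else 1)]
  simp only [hfactor]
  simp [prod_ite_zero, one_apply, ← funext_iff]

theorem sylvesterHadamard_inv :
    (sylvesterHadamard m)⁻¹ = ((2 : ℝ) ^ m)⁻¹ • sylvesterHadamard m := by
  apply inv_eq_right_inv
  rw [Matrix.mul_smul, sylvesterHadamard_mul_self, smul_smul, inv_mul_cancel₀ (by positivity),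
    one_smul]

theorem sum_sylvesterHadamard_mulVec :
    ∑ k, (sylvesterHadamard m *ᵥ x) k = 2 ^ m * x (fun _ => false) := by
  have h := congrFun (congrArg (· *ᵥ x) (sylvesterHadamard_mul_self m)) (fun _ => false)
  simp only [← mulVec_mulVec, smul_mulVec, one_mulVec, Pi.smul_apply, smul_eq_mul] at h
  rw [← h]
  simp [mulVec, dotProduct, sylvesterHadamard_const_false_apply]

theorem sum_sylvesterHadamard_mulVec_sq :
    ∑ k, (sylvesterHadamard m *ᵥ x) k ^ 2 = 2 ^ m * (x ⬝ᵥ x) := by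
  rw [← mulVec_dotProduct_mulVec_self
    (by rw [sylvesterHadamard_transpose, sylvesterHadamard_mul_self])]
  simp only [dotProduct, sq]

theorem dotProduct_sylvesterHadamard_mul_diagonal_mul_mulVec :
    x ⬝ᵥ (sylvesterHadamard m * diagonal ((fun _ => 1 / (2 : ℝ) ^ m) +
        (sylvesterHadamard m)⁻¹ *ᵥ x) * sylvesterHadamard m) *ᵥ x
      = x ⬝ᵥ x + ((2 : ℝ) ^ m)⁻¹ * ∑ k, (sylvesterHadamard m *ᵥ x) k ^ 3 := by
  have hx : x ⬝ᵥ x = ((2 : ℝ) ^ m)⁻¹ * ∑ k, (sylvesterHadamard m *ᵥ x) k ^ 2 := by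
    rw [sum_sylvesterHadamard_mulVec_sq, inv_mul_cancel_left₀ (by positivity)]
  have hp : (fun _ => 1 / (2 : ℝ) ^ m) + (sylvesterHadamard m)⁻¹ *ᵥ x
      = fun k => ((2 : ℝ) ^ m)⁻¹ + ((2 : ℝ) ^ m)⁻¹ * (sylvesterHadamard m *ᵥ x) k := by
    ext k
    simp [sylvesterHadamard_inv, smul_mulVec]
  nth_rewrite 1 [← sylvesterHadamard_transpose]
  rw [dotProduct_transpose_mul_diagonal_mul_mulVec, hp, hx]
  simp only [add_mul, sum_add_distrib, mul_assoc, ← mul_sum, ← pow_succ']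

theorem abs_sum_sylvesterHadamard_mulVec_pow_three_le (hx : x (fun _ => false) = 0) :
    |∑ k, (sylvesterHadamard m *ᵥ x) k ^ 3|
      ≤ 2 ^ m * (2 ^ m - 2) / √(2 ^ m - 1) * √(x ⬝ᵥ x) ^ 3 := by
  have hcard : (Fintype.card (Fin m → Bool) : ℝ) = 2 ^ m := by simp
  have hsq : ∑ k, (sylvesterHadamard m *ᵥ x) k ^ 2 = 2 ^ m * √(x ⬝ᵥ x) ^ 2 := by
    rw [Real.sq_sqrt (by simpa using dotProduct_star_self_nonneg x),
      sum_sylvesterHadamard_mulVec_sq]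
  have h := abs_sum_pow_three_le_of_sum_eq_zero (sylvesterHadamard m *ᵥ x) (Real.sqrt_nonneg _)
    (by rw [sum_sylvesterHadamard_mulVec, hx, mul_zero]) (hcard ▸ hsq)
  rwa [hcard] at h

end SylvesterHadamard

theorem quadratic_form_bounds_general (m : ℕ)
    (μ : {S : Fin m → Bool // S ≠ fun _ => false} → ℝ)
    (μfull : (Fin m → Bool) → ℝ)
    (hμfull : ∀ S : Fin m → Bool,
      μfull S = if h : S = fun _ => false then 0 else μ ⟨S, h⟩)
    (p : (Fin m → Bool) → ℝ)
    (hp : p = (fun _ => 1 / (2 : ℝ) ^ m) + (sylvesterHadamard m)⁻¹.mulVec μfull)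
    (Sig : Matrix {S : Fin m → Bool // S ≠ fun _ => false}
      {S : Fin m → Bool // S ≠ fun _ => false} ℝ)
    (hSig : ∀ S T, Sig S T =
      (sylvesterHadamard m * Matrix.diagonal p * sylvesterHadamard m) S.1 T.1)
    (nrm : ℝ) (hnrm : nrm = Real.sqrt (∑ S, μ S ^ 2))
    (c : ℝ) (hc : c = ((2 : ℝ) ^ m - 2) / Real.sqrt ((2 : ℝ) ^ m - 1)) :
    nrm ^ 2 - c * nrm ^ 3 ≤ μ ⬝ᵥ Sig.mulVec μ ∧
      μ ⬝ᵥ Sig.mulVec μ ≤ nrm ^ 2 + c * nrm ^ 3 := by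
  have hμfull_zero : ∀ S, ¬ S ≠ (fun _ => false) → μfull S = 0 := fun S hS => by
    simp [hμfull, not_not.1 hS]
  have hμ : μ = fun S => μfull S.1 := funext fun S => by simp [hμfull, S.2]
  have hnrm_full : nrm = √(μfull ⬝ᵥ μfull) := by
    rw [hnrm, hμ, dotProduct, ← sum_subtype_eq_sum_of_eq_zero (· ≠ fun _ => false)
      (fun S => μfull S * μfull S) fun S hS => by simp [hμfull_zero S hS]]
    simp only [sq]
  have hSig_sub : Sig = (sylvesterHadamard m * diagonal p * sylvesterHadamard m).submatrix
      Subtype.val Subtype.val := Matrix.ext hSig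
  have hquad : μ ⬝ᵥ Sig *ᵥ μ
      = nrm ^ 2 + ((2 : ℝ) ^ m)⁻¹ * ∑ k, (sylvesterHadamard m *ᵥ μfull) k ^ 3 := by
    rw [hSig_sub, hμ, dotProduct_submatrix_mulVec_of_eq_zero _ _ _ hμfull_zero, hp,
      dotProduct_sylvesterHadamard_mul_diagonal_mul_mulVec, hnrm_full,
      Real.sq_sqrt (by simpa using dotProduct_star_self_nonneg μfull)]
  have hcube := abs_sum_sylvesterHadamard_mulVec_pow_three_le m μfull
    (hμfull_zero _ (not_not.2 rfl))
  rw [← hnrm_full] at hcube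
  have hcorrection : |((2 : ℝ) ^ m)⁻¹ * ∑ k, (sylvesterHadamard m *ᵥ μfull) k ^ 3|
      ≤ c * nrm ^ 3 := by
    rw [abs_mul, abs_inv, abs_of_pos (by positivity), inv_mul_le_iff₀ (by positivity), hc]
    exact hcube.trans_eq (by ring)
  rw [hquad]
  constructor <;> linarith [abs_le.1 hcorrection]

/-- Quadratic form bounds for weak signals: with cell probabilities
`p = (1/N)·1 + H⁻¹ (0, μ^T)^T` determined by an interaction mean vector `μ ∈ ℝ^{N-1}` and
`Σ_μ` the second moment matrix of the nontrivial interactions, if `‖μ‖₂ ≤ (N-1)^{-1/2}` then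
`‖μ‖₂² - c‖μ‖₂³ ≤ μ^T Σ_μ μ ≤ ‖μ‖₂² + c‖μ‖₂³` with `c = (N-2)/√(N-1)`. -/
theorem quadratic_form_bounds (m : ℕ)
    (μ : {S : Fin m → Bool // S ≠ fun _ => false} → ℝ)
    (μfull : (Fin m → Bool) → ℝ)
    (hμfull : ∀ S : Fin m → Bool,
      μfull S = if h : S = fun _ => false then 0 else μ ⟨S, h⟩)
    (p : (Fin m → Bool) → ℝ)
    (hp : p = (fun _ => 1 / (2 : ℝ) ^ m) + (sylvesterHadamard m)⁻¹.mulVec μfull)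
    (Sig : Matrix {S : Fin m → Bool // S ≠ fun _ => false}
      {S : Fin m → Bool // S ≠ fun _ => false} ℝ)
    (hSig : ∀ S T, Sig S T =
      (sylvesterHadamard m * Matrix.diagonal p * sylvesterHadamard m) S.1 T.1)
    (nrm : ℝ) (hnrm : nrm = Real.sqrt (∑ S, μ S ^ 2))
    (hsmall : nrm ≤ ((2 : ℝ) ^ m - 1) ^ (-(1 : ℝ) / 2))
    (c : ℝ) (hc : c = ((2 : ℝ) ^ m - 2) / Real.sqrt ((2 : ℝ) ^ m - 1)) :
    nrm ^ 2 - c * nrm ^ 3 ≤ μ ⬝ᵥ Sig.mulVec μ ∧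
      μ ⬝ᵥ Sig.mulVec μ ≤ nrm ^ 2 + c * nrm ^ 3 :=
  quadratic_form_bounds_general m μ μfull hμfull p hp Sig hSig nrm hnrm c hc
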